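/- Let σ : X → Y be a covering map between second-countable, locally compact, Hausdorff, totally disconnected spaces. Then Y can be written as a countable disjoint union Y = ⋃ᵢ Wᵢ of nonempty compact open sets Wᵢ such that for each i, σ⁻¹(Wᵢ) is a countable disjoint union of compact open sets each mapped homeomorphically onto Wᵢ by σ. -/

import Mathlib

/-!
Each point of `Y` has a neighbourhood over which `σ` is trivial with discrete fibre, and a
trivialization `t` cuts the preimage of any open `W` inside its base set into the sheets
`t ⁻¹' (W × {j})`, each mapped homeomorphically onto `W`. Since `Y` is zero-dimensional these
neighbourhoods may be taken compact open; `Y` being Lindelöf, countably many `Aₙ` cover `Y`, and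
the disjointification `Aₙ \ ⋃_{m<n} Aₘ` keeps them compact open because compact sets of `Y` are
closed. Over a nonempty `W` the sheets are disjoint nonempty open subsets of the separable space
`X`, hence countably many.
-/

open Set Topology TopologicalSpace Function

section ZeroDimensional

variable {H : Type*} [TopologicalSpace H]

theorem exists_isCompact_isOpen_subset_of_mem_nhds [LocallyCompactSpace H] [T2Space H]
    [TotallyDisconnectedSpace H] {x : H} {U : Set H} (hU : U ∈ 𝓝 x) :
    ∃ K ⊆ U, x ∈ K ∧ IsCompact K ∧ IsOpen K := by
  obtain ⟨s, hs, hsU, hsc⟩ := local_compact_nhds hU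
  obtain ⟨K, hK, hxK, hKs⟩ := loc_compact_Haus_tot_disc_of_zero_dim.mem_nhds_iff.1 hs
  exact ⟨K, hKs.trans hsU, hxK, hsc.of_isClosed_subset hK.isClosed hKs, hK.isOpen⟩

theorem exists_seq_isCompact_isOpen_cover_subordinate [LindelofSpace H] [LocallyCompactSpace H]
    [T2Space H] [TotallyDisconnectedSpace H] [Nonempty H] {U : H → Set H}
    (hU : ∀ x, U x ∈ 𝓝 x) :
    ∃ A : ℕ → Set H, ⋃ n, A n = univ ∧ ∀ n, IsCompact (A n) ∧ IsOpen (A n) ∧ ∃ x, A n ⊆ U x := by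
  choose K hKU hxK hKc hKo using fun x => exists_isCompact_isOpen_subset_of_mem_nhds (hU x)
  obtain ⟨s, hs, hcover⟩ := countable_cover_nhds fun x => (hKo x).mem_nhds (hxK x)
  obtain ⟨f, hsf⟩ := countable_iff_exists_subset_range.1 hs
  refine ⟨K ∘ f, univ_subset_iff.1 ?_, fun n => ⟨hKc _, hKo _, f n, hKU _⟩⟩
  rw [← hcover]
  exact iUnion₂_subset fun x hx => by
    obtain ⟨n, rfl⟩ := hsf hx
    exact subset_iUnion (K ∘ f) n

theorem isCompact_isOpen_disjointed [T2Space H] {ι : Type*} [Preorder ι]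
    [LocallyFiniteOrderBot ι] {A : ι → Set H} (hA : ∀ n, IsCompact (A n) ∧ IsOpen (A n)) (n : ι) :
    IsCompact (disjointed A n) ∧ IsOpen (disjointed A n) :=
  disjointedRec (p := fun s => IsCompact s ∧ IsOpen s)
    (fun _ i ht => ⟨ht.1.diff (hA i).2, ht.2.sdiff (hA i).1.isClosed⟩) (hA n)

theorem exists_countable_disjoint_isCompact_isOpen_cover_subordinate [LindelofSpace H]
    [LocallyCompactSpace H] [T2Space H] [TotallyDisconnectedSpace H] {U : H → Set H}
    (hU : ∀ x, U x ∈ 𝓝 x) :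
    ∃ (ι : Type) (_ : Countable ι) (W : ι → Set H), Pairwise (Disjoint on W) ∧
      ⋃ i, W i = univ ∧
      ∀ i, (W i).Nonempty ∧ IsCompact (W i) ∧ IsOpen (W i) ∧ ∃ x, W i ⊆ U x := by
  cases isEmpty_or_nonempty H
  · exact ⟨Empty, inferInstance, isEmptyElim, isEmptyElim, Subsingleton.elim _ _, isEmptyElim⟩
  obtain ⟨A, hAcover, hA⟩ := exists_seq_isCompact_isOpen_cover_subordinate hU
  refine ⟨{n // (disjointed A n).Nonempty}, inferInstance, fun n => disjointed A n,
    (disjoint_disjointed A).comp_of_injective Subtype.val_injective, ?_, fun n => ?_⟩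
  · refine univ_subset_iff.1 fun y _ => ?_
    obtain ⟨n, hn⟩ := mem_iUnion.1 ((iUnion_disjointed.trans hAcover).symm ▸ mem_univ y)
    exact mem_iUnion.2 ⟨⟨n, y, hn⟩, hn⟩
  · obtain ⟨hc, ho⟩ := isCompact_isOpen_disjointed (fun n => ⟨(hA n).1, (hA n).2.1⟩) n
    obtain ⟨-, -, x, hx⟩ := hA n
    exact ⟨n.2, hc, ho, x, (disjointed_subset A n).trans hx⟩

end ZeroDimensional

structure IsSheetDecomposition {E X ι : Type*} [TopologicalSpace E] [TopologicalSpace X]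
    (f : E → X) (W : Set X) (V : ι → Set E) : Prop where
  pairwise_disjoint : Pairwise (Disjoint on V)
  iUnion_eq : ⋃ i, V i = f ⁻¹' W
  isOpen : ∀ i, IsOpen (V i)
  exists_homeomorph : ∀ i, ∃ e : V i ≃ₜ W, ∀ x : V i, (e x : X) = f x

namespace IsSheetDecomposition

variable {E X ι κ : Type*} [TopologicalSpace E] [TopologicalSpace X] {f : E → X} {W : Set X}
  {V : ι → Set E}

theorem isCompact (h : IsSheetDecomposition f W V) (hW : IsCompact W) (i : ι) :
    IsCompact (V i) := by
  obtain ⟨e, -⟩ := h.exists_homeomorph i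
  have := isCompact_iff_compactSpace.1 hW
  exact isCompact_iff_compactSpace.2 e.symm.compactSpace

theorem countable [SeparableSpace E] (h : IsSheetDecomposition f W V) (hW : W.Nonempty) :
    Countable ι :=
  h.pairwise_disjoint.countable_of_isOpen_disjoint h.isOpen fun i =>
    have ⟨e, _⟩ := h.exists_homeomorph i
    ⟨e.symm ⟨_, hW.some_mem⟩, (e.symm _).2⟩

theorem comp_equiv (h : IsSheetDecomposition f W V) (e : κ ≃ ι) :
    IsSheetDecomposition f W (V ∘ e) where
  pairwise_disjoint := h.pairwise_disjoint.comp_of_injective e.injective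
  iUnion_eq := e.surjective.iUnion_comp V ▸ h.iUnion_eq
  isOpen i := h.isOpen (e i)
  exists_homeomorph i := h.exists_homeomorph (e i)

theorem of_isEmpty [IsEmpty ι] (hW : f ⁻¹' W = ∅) : IsSheetDecomposition f W V where
  pairwise_disjoint i := isEmptyElim i
  iUnion_eq := by rw [iUnion_of_empty, hW]
  isOpen i := isEmptyElim i
  exists_homeomorph i := isEmptyElim i

end IsSheetDecomposition

namespace Bundle.Trivialization

variable {Z B F : Type*} [TopologicalSpace Z] [TopologicalSpace B] [TopologicalSpace F]
  {proj : Z → B} (t : Trivialization F proj) {W : Set B}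

def sheetHomeomorph (hW : W ⊆ t.baseSet) (j : F) :
    ↥(t.source ∩ t ⁻¹' (W ×ˢ {j})) ≃ₜ W :=
  have hWj : W ×ˢ {j} ⊆ t.target := t.target_eq ▸ prod_mono hW (subset_univ _)
  (t.toOpenPartialHomeomorph.symm.homeomorphOfImageSubsetSource hWj
    (t.symm_image_eq_source_inter_preimage hWj)).symm.trans
    ((Homeomorph.Set.prod W {j}).trans (Homeomorph.prodUnique W _))

theorem coe_sheetHomeomorph (hW : W ⊆ t.baseSet) (j : F)
    (x : ↥(t.source ∩ t ⁻¹' (W ×ˢ {j}))) :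
    (t.sheetHomeomorph hW j x : B) = proj x :=
  t.coe_fst x.2.1

theorem isSheetDecomposition [DiscreteTopology F] (hWo : IsOpen W) (hW : W ⊆ t.baseSet) :
    IsSheetDecomposition proj W fun j => t.source ∩ t ⁻¹' (W ×ˢ {j}) where
  pairwise_disjoint i j hij := disjoint_left.2 fun x hi hj => hij (hi.2.2.symm.trans hj.2.2)
  iUnion_eq := by
    ext x
    simp only [mem_iUnion, mem_inter_iff, mem_preimage, mem_prod, mem_singleton_iff,
      exists_and_left, exists_eq', and_true]
    refine ⟨fun ⟨hx, hxW⟩ => t.coe_fst hx ▸ hxW, fun hxW => ?_⟩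
    have hx := t.mem_source.2 (hW hxW)
    exact ⟨hx, (t.coe_fst hx).symm ▸ hxW⟩
  isOpen j := t.isOpen_inter_preimage (hWo.prod (isOpen_discrete _))
  exists_homeomorph j := ⟨t.sheetHomeomorph hW j, t.coe_sheetHomeomorph hW j⟩

end Bundle.Trivialization

theorem IsCoveringMap.exists_mem_nhds_isSheetDecomposition {E X : Type*} [TopologicalSpace E]
    [TopologicalSpace X] {f : E → X} (hf : IsCoveringMap f) (x : X) :
    ∃ U ∈ 𝓝 x, ∀ W ⊆ U, IsOpen W → ∃ V : f ⁻¹' {x} → Set E, IsSheetDecomposition f W V := by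
  have := (hf x).1
  cases isEmpty_or_nonempty (f ⁻¹' {x})
  -- `IsEvenlyCovered` allows empty fibres, over which there is no trivialization.
  · obtain ⟨-, U, hxU, hU, -, H, -⟩ := hf x
    refine ⟨U, hU.mem_nhds hxU, fun W hWU _ => ⟨isEmptyElim, .of_isEmpty ?_⟩⟩
    exact eq_empty_of_forall_notMem fun e he => isEmptyElim (H ⟨e, hWU he⟩).2
  · let t := (hf x).toTrivialization
    exact ⟨t.baseSet, t.open_baseSet.mem_nhds (hf x).mem_toTrivialization_baseSet,
      fun W hW hWo => ⟨_, t.isSheetDecomposition hWo hW⟩⟩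

theorem coveringMap_countable_clopen_decomposition_general
    {X Y : Type*} [TopologicalSpace X] [TopologicalSpace Y]
    [SecondCountableTopology X] [SecondCountableTopology Y]
    [LocallyCompactSpace Y]
    [T2Space Y]
    [TotallyDisconnectedSpace Y]
    (σ : X → Y) (hσ : IsCoveringMap σ) :
    ∃ (ι : Type) (_ : Countable ι) (W : ι → Set Y),
      Pairwise (Function.onFun Disjoint W) ∧ (⋃ i, W i) = Set.univ ∧
      (∀ i, (W i).Nonempty ∧ IsCompact (W i) ∧ IsOpen (W i)) ∧
      ∀ i, ∃ (κ : Type) (_ : Countable κ) (U : κ → Set X),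
        Pairwise (Function.onFun Disjoint U) ∧ (⋃ j, U j) = σ ⁻¹' (W i) ∧
        ∀ j, IsCompact (U j) ∧ IsOpen (U j) ∧
          ∃ e : (U j) ≃ₜ (W i), ∀ x : U j, (e x : Y) = σ x := by
  choose U hU hsheets using hσ.exists_mem_nhds_isSheetDecomposition
  obtain ⟨ι, hι, W, hWdisj, hWcover, hW⟩ :=
    exists_countable_disjoint_isCompact_isOpen_cover_subordinate hU
  refine ⟨ι, hι, W, hWdisj, hWcover, fun i => ⟨(hW i).1, (hW i).2.1, (hW i).2.2.1⟩, fun i => ?_⟩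
  obtain ⟨hne, hcpt, hopen, y, hWU⟩ := hW i
  obtain ⟨V, hV⟩ := hsheets y (W i) hWU hopen
  have := hV.countable hne
  let e := equivShrink.{0} (σ ⁻¹' {y})
  have hV' := hV.comp_equiv e.symm
  exact ⟨Shrink (σ ⁻¹' {y}), .of_equiv _ e, V ∘ e.symm, hV'.pairwise_disjoint, hV'.iUnion_eq,
    fun j => ⟨hV'.isCompact hcpt j, hV'.isOpen j, hV'.exists_homeomorph j⟩⟩

/-- Let `σ : X → Y` be a (surjective) covering map between
second-countable, locally compact, Hausdorff, totally disconnected spaces. Then `Y` is a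
countable disjoint union of nonempty compact open sets `Wᵢ` such that each `σ ⁻¹' Wᵢ` is
a countable disjoint union of compact open sets, each mapped homeomorphically onto `Wᵢ`
by `σ`. -/
theorem coveringMap_countable_clopen_decomposition
    {X Y : Type*} [TopologicalSpace X] [TopologicalSpace Y]
    [SecondCountableTopology X] [SecondCountableTopology Y]
    [LocallyCompactSpace X] [LocallyCompactSpace Y]
    [T2Space X] [T2Space Y]
    [TotallyDisconnectedSpace X] [TotallyDisconnectedSpace Y]
    (σ : X → Y) (hsurj : Function.Surjective σ) (hσ : IsCoveringMap σ) :
    ∃ (ι : Type) (_ : Countable ι) (W : ι → Set Y),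
      Pairwise (Function.onFun Disjoint W) ∧ (⋃ i, W i) = Set.univ ∧
      (∀ i, (W i).Nonempty ∧ IsCompact (W i) ∧ IsOpen (W i)) ∧
      ∀ i, ∃ (κ : Type) (_ : Countable κ) (U : κ → Set X),
        Pairwise (Function.onFun Disjoint U) ∧ (⋃ j, U j) = σ ⁻¹' (W i) ∧
        ∀ j, IsCompact (U j) ∧ IsOpen (U j) ∧
          ∃ e : (U j) ≃ₜ (W i), ∀ x : U j, (e x : Y) = σ x :=
  coveringMap_countable_clopen_decomposition_general σ hσ
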